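/- The set {(a,b) ∈ 𝒪 × 𝒪 : σ(a) = a and σ(b·β) = b·β for every σ ∈ Gal(K/ℚ_p)} equals {(x, y·e) : x, y ∈ ℤ_p}. (Equivalently: the 𝔽_p^×-invariants of 𝒪[ε]/(ε² − β·ε), where u ∈ 𝔽_p^× acts by a + bε ↦ σ_u(a) + σ_u(b)·(σ_u(β)/β)·ε, form the subring ℤ_p[v]/(v² − p·v) with v = e·ε.) -/

import Mathlib

/-!
Elements of `K` fixed by the Galois group lie in `ℚ_p`, and integral ones in `ℤ_p`; so `a = x ∈ ℤ_p`
and `b·β = c ∈ ℤ_p`. Since `(ζ - 1)^(p-1)` is `p` times a unit of `𝒪`, `p ∣ c^(p-1)` in `𝒪`, hence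
in `ℤ_p`, hence `c = p·d`; and `p = e·β` gives `b = d·e`. Conversely `(d·e)·β = d·p ∈ ℚ_p`.
-/

open Finset Polynomial

variable (p : ℕ) [hp : Fact p.Prime]

noncomputable instance zpAlgebra (K : Type*) [Field K] [Algebra ℚ_[p] K] :
    Algebra ℤ_[p] K :=
  ((algebraMap ℚ_[p] K).comp (algebraMap ℤ_[p] ℚ_[p])).toAlgebra

theorem Polynomial.map_eval_derivative_cyclotomic {R S : Type*} [CommRing R] [CommRing S]
    (f : R →+* S) (n : ℕ) (x : R) :
    f ((derivative (cyclotomic n R)).eval x) = (derivative (cyclotomic n S)).eval (f x) := by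
  rw [← map_cyclotomic n f, derivative_map, eval_map, eval₂_at_apply]

namespace IsPrimitiveRoot

variable {A : Type*} [CommRing A] [IsDomain A] {ζ : A}

theorem associated_sub_one_pow_pred_natCast (hζ : IsPrimitiveRoot ζ p) :
    Associated ((ζ - 1) ^ (p - 1)) (p : A) := by
  rw [← eval_one_cyclotomic_prime (R := A), cyclotomic_eq_prod_X_sub_primitiveRoots hζ,
    eval_prod, ← Nat.totient_prime hp.out, ← hζ.card_primitiveRoots, ← prod_const]
  refine Associated.prod _ _ _ fun η hη ↦ ?_
  obtain ⟨i, -, hi, rfl⟩ :=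
    hζ.isPrimitiveRoot_iff.mp (isPrimitiveRoot_of_mem_primitiveRoots hη)
  simpa using (hζ.associated_sub_one_pow_sub_one_of_coprime hi).neg_right

theorem eval_derivative_cyclotomic_mul (hζ : IsPrimitiveRoot ζ p) :
    (derivative (cyclotomic p A)).eval ζ * (ζ * (ζ - 1)) = p := by
  have h := congrArg (fun f ↦ (derivative f).eval ζ) (cyclotomic_prime_mul_X_sub_one A p)
  simp only [derivative_mul, derivative_sub, derivative_X, derivative_one, derivative_X_pow,
    eval_add, eval_mul, eval_sub, eval_X, eval_one, eval_pow, eval_C, sub_zero, mul_one,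
    (hζ.isRoot_cyclotomic hp.out.pos).eq_zero, add_zero] at h
  have hζp : ζ ^ (p - 1) * ζ = 1 := by
    rw [← pow_succ, Nat.sub_add_cancel hp.out.one_le, hζ.pow_eq_one]
  linear_combination ζ * h + (p : A) * hζp

theorem eq_mul_eval_derivative_cyclotomic_of_mul_eq (hζ : IsPrimitiveRoot ζ p) {b d : A}
    (h : b * (ζ * (ζ - 1)) = p * d) : b = d * (derivative (cyclotomic p A)).eval ζ := by
  have hβ : ζ * (ζ - 1) ≠ 0 :=
    mul_ne_zero (hζ.ne_zero hp.out.ne_zero) (sub_ne_zero.2 (hζ.ne_one hp.out.one_lt))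
  refine mul_right_cancel₀ hβ ?_
  rw [h, mul_assoc, hζ.eval_derivative_cyclotomic_mul p, mul_comm]

end IsPrimitiveRoot

theorem exists_algebraMap_eq_of_isIntegral_algebraMap {R F K : Type*} [CommRing R]
    [IsIntegrallyClosed R] [Field F] [Algebra R F] [IsFractionRing R F] [CommRing K]
    [Nontrivial K] [Algebra F K] [Algebra R K] [IsScalarTower R F K] {x : F}
    (hx : IsIntegral R (algebraMap F K x)) : ∃ y : R, algebraMap R F y = x :=
  IsIntegrallyClosed.isIntegral_iff.1 ((isIntegral_algebraMap_iff (algebraMap F K).injective).1 hx)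

theorem mem_range_algebraMap_of_isIntegral_of_forall_fixed {R F K : Type*} [CommRing R]
    [IsIntegrallyClosed R] [Field F] [Algebra R F] [IsFractionRing R F] [Field K] [Algebra F K]
    [Algebra R K] [IsScalarTower R F K] [IsGalois F K] [FiniteDimensional F K] {x : K}
    (hx : IsIntegral R x) (hfix : ∀ σ : K ≃ₐ[F] K, σ x = x) :
    x ∈ Set.range (algebraMap R K) := by
  obtain ⟨c, rfl⟩ := (IsGalois.mem_range_algebraMap_iff_fixed x).2 hfix
  obtain ⟨y, rfl⟩ := exists_algebraMap_eq_of_isIntegral_algebraMap hx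
  exact ⟨y, IsScalarTower.algebraMap_apply R F K y⟩

theorem dvd_of_algebraMap_dvd_algebraMap_integralClosure {R K : Type*} (F : Type*) [CommRing R]
    [IsIntegrallyClosed R] [Field F] [Algebra R F] [IsFractionRing R F] [CommRing K]
    [Nontrivial K] [Algebra F K] [Algebra R K] [IsScalarTower R F K] {r s : R}
    (h : algebraMap R (integralClosure R K) r ∣ algebraMap R (integralClosure R K) s) : r ∣ s := by
  obtain ⟨w, hw⟩ := h
  have hwK : algebraMap R K s = algebraMap R K r * w := congrArg Subtype.val hw
  rw [IsScalarTower.algebraMap_apply R F K, IsScalarTower.algebraMap_apply R F K r] at hwK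
  rcases eq_or_ne r 0 with rfl | hr
  · rw [map_zero, map_zero, zero_mul, map_eq_zero_iff _ (algebraMap F K).injective,
      IsFractionRing.to_map_eq_zero_iff] at hwK
    rw [hwK]
  have hr' : algebraMap R F r ≠ 0 := fun h ↦ hr (IsFractionRing.to_map_eq_zero_iff.1 h)
  have hw' : algebraMap F K (algebraMap R F s / algebraMap R F r) = w := by
    rw [div_eq_mul_inv, map_mul, hwK, mul_right_comm, ← map_mul, mul_inv_cancel₀ hr', map_one,
      one_mul]
  obtain ⟨y, hy⟩ := exists_algebraMap_eq_of_isIntegral_algebraMap (hw' ▸ w.2)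
  refine ⟨y, IsFractionRing.injective R F ?_⟩
  rw [map_mul, hy, mul_div_cancel₀ _ hr']

theorem natCast_dvd_pow_pred_of_algebraMap_eq_mul_sub_one {R K : Type*} (F : Type*)
    [CommRing R] [IsIntegrallyClosed R] [Field F] [Algebra R F] [IsFractionRing R F] [Field K]
    [Algebra F K] [Algebra R K] [IsScalarTower R F K] {ζ b : integralClosure R K}
    (hζ : IsPrimitiveRoot ζ p) {c : R} (hc : algebraMap R _ c = b * (ζ - 1)) :
    (p : R) ∣ c ^ (p - 1) := by
  refine dvd_of_algebraMap_dvd_algebraMap_integralClosure F (K := K) ?_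
  rw [map_pow, hc, map_natCast]
  exact (hζ.associated_sub_one_pow_pred_natCast p).symm.dvd.trans
    (pow_dvd_pow_of_dvd (dvd_mul_left _ _) _)

theorem stmt16 (K : Type*) [Field K] [Algebra ℚ_[p] K]
    [IsCyclotomicExtension {p} ℚ_[p] K]
    (ζ : K) (hζ : IsPrimitiveRoot ζ p) :
    {x : K × K |
        x.1 ∈ integralClosure ℤ_[p] K ∧ x.2 ∈ integralClosure ℤ_[p] K ∧
        ∀ σ : K ≃ₐ[ℚ_[p]] K, σ x.1 = x.1 ∧ σ (x.2 * (ζ * (ζ - 1))) = x.2 * (ζ * (ζ - 1))} =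
    {x : K × K |
        ∃ a b : ℤ_[p], x.1 = algebraMap ℚ_[p] K (a : ℚ_[p]) ∧
          x.2 = algebraMap ℚ_[p] K (b : ℚ_[p]) *
            Polynomial.eval ζ (Polynomial.derivative (Polynomial.cyclotomic p K))} := by
  have : IsScalarTower ℤ_[p] ℚ_[p] K := IsScalarTower.of_algebraMap_eq' rfl
  have := IsCyclotomicExtension.isGalois {p} ℚ_[p] K
  have := IsCyclotomicExtension.finiteDimensional {p} ℚ_[p] K
  set O := integralClosure ℤ_[p] K
  let ζ' : O := ⟨ζ, (hζ.isIntegral hp.out.pos).tower_top⟩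
  have hζ' : IsPrimitiveRoot ζ' p := IsPrimitiveRoot.coe_submonoidClass_iff.1 hζ
  have he : (derivative (cyclotomic p K)).eval ζ = ((derivative (cyclotomic p O)).eval ζ' : O) :=
    (map_eval_derivative_cyclotomic (algebraMap O K) p ζ').symm
  ext ⟨a, b⟩
  simp only [Set.mem_ofPred_eq]
  constructor
  · rintro ⟨ha, hb, hfix⟩
    obtain ⟨x, rfl⟩ := mem_range_algebraMap_of_isIntegral_of_forall_fixed (F := ℚ_[p]) ha
      fun σ ↦ (hfix σ).1
    obtain ⟨c, hc⟩ := mem_range_algebraMap_of_isIntegral_of_forall_fixed (F := ℚ_[p])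
      (mul_mem hb (ζ' * (ζ' - 1)).2) fun σ ↦ (hfix σ).2
    have hcO : algebraMap ℤ_[p] O c = ⟨b, hb⟩ * (ζ' * (ζ' - 1)) := Subtype.ext hc
    obtain ⟨d, rfl⟩ : (p : ℤ_[p]) ∣ c := PadicInt.prime_p.dvd_of_dvd_pow <|
      natCast_dvd_pow_pred_of_algebraMap_eq_mul_sub_one p ℚ_[p] hζ' (hcO.trans (mul_assoc ..).symm)
    have hbO : (⟨b, hb⟩ : O) = algebraMap ℤ_[p] O d * _ :=
      hζ'.eq_mul_eval_derivative_cyclotomic_of_mul_eq p (by rw [← hcO, map_mul, map_natCast])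
    exact ⟨x, d, rfl, by rw [he]; exact congrArg Subtype.val hbO⟩
  · rintro ⟨x, d, rfl, rfl⟩
    refine ⟨(algebraMap ℤ_[p] O x).2, he ▸ (algebraMap ℤ_[p] O d * _).2,
      fun σ ↦ ⟨σ.commutes _, ?_⟩⟩
    rw [mul_assoc, hζ.eval_derivative_cyclotomic_mul p, ← map_natCast (algebraMap ℚ_[p] K),
      ← map_mul]
    exact σ.commutes _
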